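/- Let ρ be a 4×4 complex matrix and let ρ̃ be the 4×4 'reshuffled' matrix defined by ρ̃_{2k+l, 2k'+l'} = ρ_{2k+k', 2l+l'} for k, l, k', l' ∈ {0,1}. Then R(ρ) = 2 · T ρ̃ Tᵀ, where T = (1/√2) · !![1,0,0,1; 0,1,1,0; 0,I,-I,0; 1,0,0,-1]. -/

import Mathlib

open Matrix Complex Kronecker
open scoped ComplexOrder

noncomputable section

/-- The Pauli matrix σ₀ (the 2×2 identity). -/
def pauli0 : Matrix (Fin 2) (Fin 2) ℂ := 1
/-- The Pauli matrix σ₁. -/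
def pauli1 : Matrix (Fin 2) (Fin 2) ℂ := !![0, 1; 1, 0]
/-- The Pauli matrix σ₂. -/
def pauli2 : Matrix (Fin 2) (Fin 2) ℂ := !![0, -I; I, 0]
/-- The Pauli matrix σ₃. -/
def pauli3 : Matrix (Fin 2) (Fin 2) ℂ := !![1, 0; 0, -1]

/-- The four Pauli matrices. -/
def pauli : Fin 4 → Matrix (Fin 2) (Fin 2) ℂ := ![pauli0, pauli1, pauli2, pauli3]

/-- Kronecker product of two 2×2 complex matrices as a 4×4 matrix, with
entry `(2i+j, 2k+l)` equal to `A i k * B j l`. -/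
def kron (A B : Matrix (Fin 2) (Fin 2) ℂ) : Matrix (Fin 4) (Fin 4) ℂ :=
  Matrix.reindex finProdFinEquiv finProdFinEquiv (A ⊗ₖ B)

/-- The Lorentz metric matrix `diag(1,-1,-1,-1)`. -/
def Mmetric : Matrix (Fin 4) (Fin 4) ℝ := Matrix.diagonal ![1, -1, -1, -1]

/-- A real 4×4 matrix is a proper orthochronous Lorentz transformation if
`L M Lᵀ = M`, `det L = 1` and `L₀₀ > 0`. -/
def IsProperOrthochronousLorentz (L : Matrix (Fin 4) (Fin 4) ℝ) : Prop :=
  L * Mmetric * Lᵀ = Mmetric ∧ L.det = 1 ∧ 0 < L 0 0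

/-- The matrix `T` transforming the density-matrix picture to the `R`-picture. -/
def Tmat : Matrix (Fin 4) (Fin 4) ℂ :=
  ((Real.sqrt 2 : ℂ))⁻¹ • !![1, 0, 0, 1; 0, 1, 1, 0; 0, I, -I, 0; 1, 0, 0, -1]

/-- The real parameterization `R(ρ)ᵢⱼ = Tr(ρ (σᵢ ⊗ σⱼ))` of a 4×4 matrix. -/
def Rmat (ρ : Matrix (Fin 4) (Fin 4) ℂ) : Matrix (Fin 4) (Fin 4) ℂ :=
  fun i j => Matrix.trace (ρ * kron (pauli i) (pauli j))

/-- The Lorentz transformation `L(A) = T (A ⊗ A̅) T† / |det A|` associated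
with a 2×2 matrix `A`. -/
def Lmat (A : Matrix (Fin 2) (Fin 2) ℂ) : Matrix (Fin 4) (Fin 4) ℂ :=
  ((‖A.det‖ : ℝ) : ℂ)⁻¹ • (Tmat * kron A (A.map (starRingEnd ℂ)) * Tmatᴴ)

/-- The singular values of a 4×4 complex matrix: the nonnegative square roots of
the eigenvalues of `Mᴴ M`. -/
def singularValues (M : Matrix (Fin 4) (Fin 4) ℂ) : Fin 4 → ℝ :=
  fun i => Real.sqrt ((Matrix.isHermitian_conjTranspose_mul_self M).eigenvalues i)

/-- The multiset of singular values of a 4×4 complex matrix. -/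
def singularValuesMultiset (M : Matrix (Fin 4) (Fin 4) ℂ) : Multiset ℝ :=
  Finset.univ.val.map (singularValues M)

/-- The positive semidefinite square root of a positive semidefinite matrix
(Mathlib's former `Matrix.PosSemidef.sqrt`, removed since; restored with its old definition). -/
def Matrix.PosSemidef.sqrt {n 𝕜 : Type*} [Fintype n] [DecidableEq n] [RCLike 𝕜]
    {A : Matrix n n 𝕜} (hA : A.PosSemidef) : Matrix n n 𝕜 :=
  hA.1.eigenvectorUnitary.1 * diagonal ((↑) ∘ (√·) ∘ hA.1.eigenvalues) *
    (star hA.1.eigenvectorUnitary : Matrix n n 𝕜)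

open scoped Classical in
/-- The concurrence of a two-qubit state `ρ`:
`max (0, τ₁ - τ₂ - τ₃ - τ₄) = max (0, 2 max τᵢ - ∑ τᵢ)` where the `τᵢ` are the
singular values of `Xᵀ (σ₂ ⊗ σ₂) X` with `ρ = X Xᴴ` (here `X = √ρ`). -/
def concurrence (ρ : Matrix (Fin 4) (Fin 4) ℂ) : ℝ :=
  if h : ρ.PosSemidef then
    let τ := singularValues (h.sqrtᵀ * kron pauli2 pauli2 * h.sqrt)
    max 0 (2 * Finset.univ.sup' Finset.univ_nonempty τ - ∑ i, τ i)
  else 0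

/-- A two-qubit density matrix: positive semidefinite with trace 1. -/
def IsDensityMatrix (ρ : Matrix (Fin 4) (Fin 4) ℂ) : Prop :=
  ρ.PosSemidef ∧ ρ.trace = 1

/-- The reshuffled matrix `X̃` with `X̃_{2k+l,2k'+l'} = X_{2k+k',2l+l'}`. -/
def reshuffle (X : Matrix (Fin 4) (Fin 4) ℂ) : Matrix (Fin 4) (Fin 4) ℂ :=
  fun i j =>
    X ⟨2 * (i.val / 2) + j.val / 2, by have := i.isLt; have := j.isLt; omega⟩
      ⟨2 * (i.val % 2) + j.val % 2, by have := i.isLt; have := j.isLt; omega⟩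

/-- The partial transpose on the second qubit:
`(ρ^PT)_{2i+j,2k+l} = ρ_{2i+l,2k+j}`. -/
def ptranspose (ρ : Matrix (Fin 4) (Fin 4) ℂ) : Matrix (Fin 4) (Fin 4) ℂ :=
  fun a b =>
    ρ ⟨2 * (a.val / 2) + b.val % 2, by have := a.isLt; have := b.isLt; omega⟩
      ⟨2 * (b.val / 2) + a.val % 2, by have := a.isLt; have := b.isLt; omega⟩

lemma kron_apply (A B : Matrix (Fin 2) (Fin 2) ℂ) (i j : Fin 4) :
    kron A B i j = A ⟨i.val / 2, by omega⟩ ⟨j.val / 2, by omega⟩ *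
      B ⟨i.val % 2, by omega⟩ ⟨j.val % 2, by omega⟩ := by
  simp [kron, finProdFinEquiv, Matrix.kroneckerMap_apply, Fin.divNat, Fin.modNat]

set_option maxHeartbeats 4000000 in
/-- `R(ρ) = 2 · T ρ̃ Tᵀ` where `ρ̃` is the reshuffled matrix. -/
theorem Rmat_eq_reshuffle (ρ : Matrix (Fin 4) (Fin 4) ℂ) :
    Rmat ρ = (2 : ℂ) • (Tmat * reshuffle ρ * Tmatᵀ) := by
  have h2 : (Real.sqrt 2 : ℂ) * (Real.sqrt 2 : ℂ) = 2 := by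
    norm_cast; exact_mod_cast Real.mul_self_sqrt (by norm_num)
  have hs : ((Real.sqrt 2 : ℂ))⁻¹ * ((Real.sqrt 2 : ℂ))⁻¹ = 1/2 := by
    rw [← mul_inv, h2]; norm_num
  have hs2 : ((Real.sqrt 2 : ℂ))⁻¹ ^ 2 = 1/2 := by rw [sq, hs]
  ext i j
  fin_cases i <;> fin_cases j <;>
    simp [Rmat, Tmat, reshuffle, kron_apply, pauli, pauli0, pauli1, pauli2, pauli3,
      Matrix.trace, Matrix.mul_apply, Fin.sum_univ_four, Matrix.diag, Matrix.one_apply,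
      Matrix.vecMul, dotProduct, Matrix.vecHead, Matrix.vecTail,
      (show ((0 : Fin 4) : ℕ) = 0 from rfl), (show ((1 : Fin 4) : ℕ) = 1 from rfl),
      (show ((2 : Fin 4) : ℕ) = 2 from rfl), (show ((3 : Fin 4) : ℕ) = 3 from rfl)] <;>
    first
      | (ring_nf; simp [hs, hs2]; ring)
      | (ring_nf; simp [hs, hs2])
      | ring_nf
      | rfl
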